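/- For every rooted binary tree T with n leaves, N_a(T) ≤ n(n-1)/2, with equality if and only if T is the caterpillar tree; and for n = 2^k, N_a(T) ≥ 2^{k-1}·k with equality if and only if T is the fully balanced tree of height k. -/

import Mathlib

/-- Rooted binary trees: a leaf, or an internal vertex with two child subtrees. -/
inductive BTree where
  | leaf : BTree
  | node : BTree → BTree → BTree
deriving DecidableEq

namespace BTree

/-- Number of leaves of a rooted binary tree. -/
def numLeaves : BTree → ℕ
  | leaf => 1
  | node l r => numLeaves l + numLeaves r

/-- Sackin index: sum over internal vertices `v` of `n_{v_a} + n_{v_b}`. -/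
def sackin : BTree → ℕ
  | leaf => 0
  | node l r => sackin l + sackin r + (numLeaves l + numLeaves r)

/-- Colless index: sum over internal vertices `v` of `|n_{v_a} - n_{v_b}|`. -/
def colless : BTree → ℕ
  | leaf => 0
  | node l r =>
      colless l + colless r +
        (max (numLeaves l) (numLeaves r) - min (numLeaves l) (numLeaves r))

/-- `N_a`: sum over internal vertices of the larger child-subtree leaf count. -/
def Na : BTree → ℕ
  | leaf => 0
  | node l r => Na l + Na r + max (numLeaves l) (numLeaves r)

/-- `N_b`: sum over internal vertices of the smaller child-subtree leaf count. -/
def Nb : BTree → ℕ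
  | leaf => 0
  | node l r => Nb l + Nb r + min (numLeaves l) (numLeaves r)

/-- `Δ_CS = C - S`, as an integer. -/
def deltaCS (T : BTree) : ℤ := (colless T : ℤ) - (sackin T : ℤ)

/-- Caterpillar trees: every internal vertex has at least one leaf child. -/
def isCaterpillar : BTree → Prop
  | leaf => True
  | node l r => (l = leaf ∧ isCaterpillar r) ∨ (r = leaf ∧ isCaterpillar l)

/-- The fully balanced tree of height `h`. -/
def fbTree : ℕ → BTree
  | 0 => leaf
  | h + 1 => node (fbTree h) (fbTree h)

end BTree

namespace BTree

lemma one_le_numLeaves (T : BTree) : 1 ≤ numLeaves T := by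
  induction T with
  | leaf => simp [numLeaves]
  | node l r ihl ihr => simp only [numLeaves]; omega

lemma eq_leaf_of_numLeaves_eq_one {T : BTree} (h : numLeaves T = 1) : T = leaf := by
  cases T with
  | leaf => rfl
  | node l r =>
      have hl := one_le_numLeaves l
      have hr := one_le_numLeaves r
      simp only [numLeaves] at h
      omega

lemma quad (a b : ℕ) (ha : 1 ≤ a) (hb : 1 ≤ b) :
    (a + b) * ((a + b) - 1) = a * (a - 1) + b * (b - 1) + 2 * (a * b) := by
  obtain ⟨a', rfl⟩ := Nat.exists_eq_add_of_le ha
  obtain ⟨b', rfl⟩ := Nat.exists_eq_add_of_le hb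
  have h1 : (1 + a' + (1 + b')) - 1 = a' + b' + 1 := by omega
  have h2 : (1 + a') - 1 = a' := by omega
  have h3 : (1 + b') - 1 = b' := by omega
  rw [h1, h2, h3]; ring

lemma two_mul_Na (T : BTree) : 2 * Na T = sackin T + colless T := by
  induction T with
  | leaf => simp [Na, sackin, colless]
  | node l r ihl ihr =>
      simp only [Na, sackin, colless]
      rcases le_total (numLeaves l) (numLeaves r) with h | h
      · rw [max_eq_right h, min_eq_left h] ; omega
      · rw [max_eq_left h, min_eq_right h] ; omega

lemma upper_main (T : BTree) :
    2 * Na T ≤ numLeaves T * (numLeaves T - 1) ∧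
      (2 * Na T = numLeaves T * (numLeaves T - 1) ↔ isCaterpillar T) := by
  induction T with
  | leaf => simp [Na, numLeaves, isCaterpillar]
  | node l r ihl ihr =>
      obtain ⟨hlle, hliff⟩ := ihl
      obtain ⟨hrle, hriff⟩ := ihr
      have ha := one_le_numLeaves l
      have hb := one_le_numLeaves r
      set a := numLeaves l with hadef
      set b := numLeaves r with hbdef
      have key := quad a b ha hb
      have hmaxle : max a b ≤ a * b := by
        apply max_le
        · exact Nat.le_mul_of_pos_right a hb
        · exact Nat.le_mul_of_pos_left b ha
      simp only [Na, numLeaves, ← hadef, ← hbdef]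
      constructor
      · rw [key]; linarith
      · constructor
        · intro h
          rw [key] at h
          have h1 : 2 * Na l = a * (a - 1) := by linarith
          have h2 : 2 * Na r = b * (b - 1) := by linarith
          have h3 : max a b = a * b := by linarith
          have hmin : a = 1 ∨ b = 1 := by
            rcases le_total a b with hab | hab
            · left
              rw [max_eq_right hab] at h3
              have hbpos : 0 < b := hb
              have h4 : a * b = 1 * b := by rw [one_mul]; exact h3.symm
              exact Nat.eq_of_mul_eq_mul_right hbpos h4
            · right
              rw [max_eq_left hab] at h3
              have hapos : 0 < a := ha
              have h4 : a * b = a * 1 := by rw [mul_one]; exact h3.symm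
              exact Nat.eq_of_mul_eq_mul_left hapos h4
          rcases hmin with h1' | h1'
          · left
            exact ⟨eq_leaf_of_numLeaves_eq_one h1', hriff.mp h2⟩
          · right
            exact ⟨eq_leaf_of_numLeaves_eq_one h1', hliff.mp h1⟩
        · intro hcat
          rcases hcat with ⟨hleaf, hcatr⟩ | ⟨hleaf, hcatl⟩
          · have ha1 : a = 1 := by rw [hadef, hleaf]; rfl
            have hNal : Na l = 0 := by rw [hleaf]; rfl
            have h2 : 2 * Na r = b * (b - 1) := hriff.mpr hcatr
            rw [key, ha1, hNal]
            have hmax : max 1 b = b := max_eq_right hb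
            rw [hmax]
            have : (1:ℕ) * (1 - 1) = 0 := by norm_num
            omega
          · have hb1 : b = 1 := by rw [hbdef, hleaf]; rfl
            have hNar : Na r = 0 := by rw [hleaf]; rfl
            have h2 : 2 * Na l = a * (a - 1) := hliff.mpr hcatl
            rw [key, hb1, hNar]
            have hmax : max a 1 = a := max_eq_left ha
            rw [hmax]
            omega

lemma sackin_lb (T : BTree) : ∀ k : ℕ, numLeaves T ≤ 2 ^ k →
    numLeaves T * (k + 1) ≤ sackin T + 2 ^ k := by
  induction T with
  | leaf =>
      intro k _
      simp only [numLeaves, sackin, one_mul, zero_add]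
      exact Nat.succ_le_of_lt (Nat.lt_two_pow_self (n := k))
  | node l r ihl ihr =>
      intro k hn
      have ha := one_le_numLeaves l
      have hb := one_le_numLeaves r
      simp only [numLeaves, sackin] at hn ⊢
      cases k with
      | zero => simp at hn; omega
      | succ m =>
          have hpow : (2:ℕ) ^ (m + 1) = 2 * 2 ^ m := by ring
          rcases le_or_gt (numLeaves l) (2 ^ m) with hl2 | hl2
          · rcases le_or_gt (numLeaves r) (2 ^ m) with hr2 | hr2
            · have h1 := ihl m hl2
              have h2 := ihr m hr2
              nlinarith
            · -- numLeaves r > 2^m, so numLeaves l < 2^m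
              have hl2' : numLeaves l ≤ 2 ^ m := hl2
              have h1 := ihl m hl2'
              have h2 := ihr (m + 1) (by omega)
              nlinarith
          · -- numLeaves l > 2^m, so numLeaves r ≤ 2^m
            have hr2 : numLeaves r ≤ 2 ^ m := by omega
            have h1 := ihl (m + 1) (by omega)
            have h2 := ihr m hr2
            nlinarith

lemma numLeaves_fb (k : ℕ) : numLeaves (fbTree k) = 2 ^ k := by
  induction k with
  | zero => rfl
  | succ m ih => simp only [fbTree, numLeaves, ih]; ring

lemma two_mul_Na_fb (k : ℕ) : 2 * Na (fbTree k) = 2 ^ k * k := by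
  induction k with
  | zero => rfl
  | succ m ih =>
      simp only [fbTree, Na, numLeaves_fb, max_self]
      have : (2:ℕ) ^ (m + 1) = 2 * 2 ^ m := by ring
      nlinarith

lemma Na_fb (k : ℕ) : Na (fbTree k) = 2 ^ (k - 1) * k := by
  cases k with
  | zero => rfl
  | succ m =>
      have h := two_mul_Na_fb (m + 1)
      have h2 : (2:ℕ) ^ (m + 1) * (m + 1) = 2 * (2 ^ m * (m + 1)) := by ring
      rw [h2] at h
      have := Nat.eq_of_mul_eq_mul_left (by norm_num : 0 < 2) h
      simpa using this

lemma fb_of_colless_zero (T : BTree) : ∀ k : ℕ, colless T = 0 → numLeaves T = 2 ^ k →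
    T = fbTree k := by
  induction T with
  | leaf =>
      intro k _ hn
      simp only [numLeaves] at hn
      cases k with
      | zero => rfl
      | succ m =>
          exfalso
          have h1 : 1 ≤ 2 ^ m := Nat.one_le_two_pow
          have : (2:ℕ) ^ (m + 1) = 2 * 2 ^ m := by ring
          omega
  | node l r ihl ihr =>
      intro k hC hn
      have ha := one_le_numLeaves l
      have hb := one_le_numLeaves r
      simp only [colless, numLeaves] at hC hn
      have hCl : colless l = 0 := by omega
      have hCr : colless r = 0 := by omega
      have hsub : max (numLeaves l) (numLeaves r) - min (numLeaves l) (numLeaves r) = 0 := by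
        omega
      have hab : numLeaves l = numLeaves r := by
        rcases le_total (numLeaves l) (numLeaves r) with h | h
        · rw [max_eq_right h, min_eq_left h] at hsub; omega
        · rw [max_eq_left h, min_eq_right h] at hsub; omega
      cases k with
      | zero => simp at hn; omega
      | succ m =>
          have hpow : (2:ℕ) ^ (m + 1) = 2 * 2 ^ m := by ring
          have hlm : numLeaves l = 2 ^ m := by omega
          have hrm : numLeaves r = 2 ^ m := by omega
          simp only [fbTree]
          rw [ihl m hCl hlm, ihr m hCr hrm]

end BTree

open BTree in
/-- `N_a(T) ≤ n(n-1)/2` with equality iff `T` is the caterpillar;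
and for `n = 2^k`, `N_a(T) ≥ 2^{k-1}·k` with equality iff `T = T^fb_k`. -/
theorem Na_extrema (T : BTree) :
    (Na T ≤ numLeaves T * (numLeaves T - 1) / 2 ∧
      (Na T = numLeaves T * (numLeaves T - 1) / 2 ↔ isCaterpillar T)) ∧
    (∀ k : ℕ, numLeaves T = 2 ^ k →
      2 ^ (k - 1) * k ≤ Na T ∧ (Na T = 2 ^ (k - 1) * k ↔ T = fbTree k)) := by
  obtain ⟨hle, hiff⟩ := upper_main T
  have h1 : 1 ≤ numLeaves T := one_le_numLeaves T
  have hd : 2 ∣ numLeaves T * (numLeaves T - 1) := by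
    have he : Even ((numLeaves T - 1) * ((numLeaves T - 1) + 1)) :=
      Nat.even_mul_succ_self (numLeaves T - 1)
    rw [Nat.sub_add_cancel h1] at he
    rw [mul_comm]
    exact he.two_dvd
  constructor
  · constructor
    · rw [Nat.le_div_iff_mul_le (by norm_num : 0 < 2), mul_comm]
      exact hle
    · rw [← hiff]
      constructor
      · intro h
        rw [h, Nat.mul_div_cancel' hd]
      · intro h
        omega
  · intro k hk
    have hS := sackin_lb T k (le_of_eq hk)
    rw [hk] at hS
    have hSk : 2 ^ k * k ≤ sackin T := by
      have e : (2:ℕ) ^ k * (k + 1) = 2 ^ k * k + 2 ^ k := by ring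
      omega
    have hNa2 : 2 * Na T = sackin T + colless T := two_mul_Na T
    cases k with
    | zero =>
        have hT : T = leaf := eq_leaf_of_numLeaves_eq_one (by simpa using hk)
        subst hT
        simp [Na, fbTree]
    | succ m =>
        have hpow : (2:ℕ) ^ (m + 1) = 2 * 2 ^ m := by ring
        have hlow : 2 ^ m * (m + 1) ≤ Na T := by
          have h2 : 2 * (2 ^ m * (m + 1)) ≤ 2 * Na T := by
            have e : 2 * (2 ^ m * (m + 1)) = 2 ^ (m + 1) * (m + 1) := by ring
            omega
          exact Nat.le_of_mul_le_mul_left h2 (by norm_num)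
        constructor
        · simpa using hlow
        · constructor
          · intro h
            have h' : Na T = 2 ^ m * (m + 1) := by simpa using h
            have hC : colless T = 0 := by
              have e : 2 * Na T = 2 ^ (m + 1) * (m + 1) := by rw [h']; ring
              omega
            exact fb_of_colless_zero T (m + 1) hC hk
          · intro h
            subst h
            simpa using Na_fb (m + 1)
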